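/- Let H = (V_H, E_H) be an undirected multigraph with edge connectivity λ_H = λ(H), let N_h ⊆ E_H be a subset of its edges, let F_1, …, F_m be a maximal spanning forest decomposition (msfd) of order m ≥ λ_H + 1 of H ∖ N_h, and let H' = (V_H, E') be the graph with E' = N_h ∪ F_1 ∪ … ∪ F_{λ_H+1}. Then λ(H') = λ(H), and a cut (S, V_H∖S) is a minimum cut of H' if and only if it is a minimum cut of H. -/

import Mathlib

open scoped Classical in
/-- A multigraph on vertex set `V` is modeled by the multiset of its edges,
each an unordered pair of distinct vertices. `mCut M S` is the size of the edge cut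
`E_M(S, V∖S)`: the number of edges of `M` (with multiplicity) with one endpoint in `S`
and the other in `Sᶜ`. -/
noncomputable def mCut {V : Type*} (M : Multiset (Sym2 V)) (S : Set V) : ℕ :=
  Multiset.card (M.filter fun e => ∃ u ∈ S, ∃ v ∈ Sᶜ, e = s(u, v))

/-- The simple graph underlying a multiset of edges. -/
def graphOf {V : Type*} (M : Multiset (Sym2 V)) : SimpleGraph V :=
  SimpleGraph.fromEdgeSet {e | e ∈ M}

/-- A multiset of edges is a forest: no repeated edges, no self-loops, and the
underlying simple graph is acyclic. -/
def IsMForest {V : Type*} (F : Multiset (Sym2 V)) : Prop :=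
  F.Nodup ∧ (∀ e ∈ F, ¬e.IsDiag) ∧ (graphOf F).IsAcyclic

/-- `F` is a maximal spanning forest of the multigraph `R`: a subforest of `R` such that
the endpoints of every edge of `R` lie in the same component of `F`. -/
def IsMaxSpanningForest {V : Type*} (R F : Multiset (Sym2 V)) : Prop :=
  F ≤ R ∧ IsMForest F ∧ ∀ u v : V, s(u, v) ∈ R → (graphOf F).Reachable u v

open scoped Classical in
/-- `F 1, …, F m` is a maximal spanning forest decomposition of order `m` of the
multigraph `M`: the forests decompose `M` (so they are edge-disjoint as sub-multisets
and their union is `M`) and each `F i` is a maximal spanning forest of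
`M ∖ (F 1 ∪ … ∪ F (i-1))`. -/
noncomputable def IsMSFD {V : Type*} (M : Multiset (Sym2 V)) (m : ℕ)
    (F : ℕ → Multiset (Sym2 V)) : Prop :=
  (∑ i ∈ Finset.Icc 1 m, F i) = M ∧
  ∀ i ∈ Finset.Icc 1 m, IsMaxSpanningForest (M - ∑ j ∈ Finset.Icc 1 (i - 1), F j) (F i)

/-- The edge connectivity of the multigraph `M`: the minimum of `λ(S,M)` over all
nonempty proper subsets `S ⊂ V`. -/
noncomputable def mEdgeConn {V : Type*} (M : Multiset (Sym2 V)) : ℕ :=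
  sInf {c : ℕ | ∃ S : Set V, S.Nonempty ∧ Sᶜ.Nonempty ∧ mCut M S = c}

/-! A cut of `H` of value at most `λ(H)` can be destroyed in `H'` only by a forest `F i`,
`i ≤ λ(H) + 1`, that does not cross it; but then, by maximality, no edge of `H ∖ N` left over
after `F 1, …, F (i-1)` crosses it either, so the cut is already carried by `F 1, …, F (i-1)`.
Hence `min (λ(S,H), λ(H) + 1) ≤ λ(S,H') ≤ λ(S,H)` for every `S`, which pins down both the
connectivity and the minimum cuts of `H'`. -/

section Cut

open scoped Classical

variable {V : Type*}

lemma mCut_add (A B : Multiset (Sym2 V)) (S : Set V) :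
    mCut (A + B) S = mCut A S + mCut B S := by
  simp [mCut, Multiset.filter_add]

lemma mCut_mono {A B : Multiset (Sym2 V)} (h : A ≤ B) (S : Set V) :
    mCut A S ≤ mCut B S :=
  Multiset.card_le_card (Multiset.filter_le_filter _ h)

lemma mCut_sum {ι : Type*} (t : Finset ι) (F : ι → Multiset (Sym2 V)) (S : Set V) :
    mCut (∑ i ∈ t, F i) S = ∑ i ∈ t, mCut (F i) S :=
  map_sum
    (⟨⟨(mCut · S), by simp [mCut]⟩, (mCut_add · · S)⟩ : Multiset (Sym2 V) →+ ℕ) F t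

lemma one_le_mCut_of_mem {M : Multiset (Sym2 V)} {S : Set V} {u v : V}
    (h : s(u, v) ∈ M) (hu : u ∈ S) (hv : v ∈ Sᶜ) : 1 ≤ mCut M S :=
  Multiset.card_pos_iff_exists_mem.mpr ⟨_, Multiset.mem_filter.mpr ⟨h, u, hu, v, hv, rfl⟩⟩

lemma exists_mem_crossing_of_reachable {F : Multiset (Sym2 V)} {S : Set V} {u v : V}
    (h : (graphOf F).Reachable u v) (hu : u ∈ S) (hv : v ∈ Sᶜ) :
    ∃ a ∈ S, ∃ b ∈ Sᶜ, s(a, b) ∈ F := by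
  obtain ⟨p⟩ := h
  obtain ⟨d, -, hdS, hdnS⟩ := p.exists_boundary_dart S hu hv
  have hadj : (SimpleGraph.fromEdgeSet {e | e ∈ F}).Adj d.fst d.snd := d.adj
  exact ⟨d.fst, hdS, d.snd, hdnS, (SimpleGraph.fromEdgeSet_adj _).mp hadj |>.1⟩

lemma IsMaxSpanningForest.mCut_eq_zero {R F : Multiset (Sym2 V)} (hF : IsMaxSpanningForest R F)
    {S : Set V} (hS : mCut F S = 0) : mCut R S = 0 := by
  rw [mCut, Multiset.card_eq_zero, Multiset.filter_eq_nil]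
  rintro e he ⟨u, hu, v, hv, rfl⟩
  obtain ⟨a, ha, b, hb, hab⟩ := exists_mem_crossing_of_reachable (hF.2.2 u v he) hu hv
  have := one_le_mCut_of_mem hab ha hb
  omega

lemma IsMSFD.min_mCut_le_mCut_sum {M : Multiset (Sym2 V)} {m : ℕ} {F : ℕ → Multiset (Sym2 V)}
    (hF : IsMSFD M m F) {k : ℕ} (hk : k ≤ m) (S : Set V) :
    min (mCut M S) k ≤ mCut (∑ i ∈ Finset.Icc 1 k, F i) S := by
  have prefix_le {j l : ℕ} (hjl : j ≤ l) :
      ∑ i ∈ Finset.Icc 1 j, F i ≤ ∑ i ∈ Finset.Icc 1 l, F i :=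
    Finset.sum_le_sum_of_subset (Finset.Icc_subset_Icc_right hjl)
  by_cases hcross : ∀ i ∈ Finset.Icc 1 k, 1 ≤ mCut (F i) S
  · calc min (mCut M S) k ≤ ∑ _i ∈ Finset.Icc 1 k, 1 := by simp
      _ ≤ ∑ i ∈ Finset.Icc 1 k, mCut (F i) S := Finset.sum_le_sum hcross
      _ = mCut (∑ i ∈ Finset.Icc 1 k, F i) S := (mCut_sum _ _ _).symm
  · push Not at hcross
    obtain ⟨i, hi, hFi⟩ := hcross
    obtain ⟨hi1, hik⟩ := Finset.mem_Icc.mp hi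
    set P := ∑ j ∈ Finset.Icc 1 (i - 1), F j
    have hrest : mCut (M - P) S = 0 :=
      (hF.2 i (Finset.mem_Icc.mpr ⟨hi1, hik.trans hk⟩)).mCut_eq_zero (by omega)
    have hPM : P ≤ M := hF.1 ▸ prefix_le (by omega)
    calc min (mCut M S) k ≤ mCut M S := min_le_left _ _
      _ = mCut (P + (M - P)) S := by rw [add_tsub_cancel_of_le hPM]
      _ = mCut P S := by rw [mCut_add, hrest, add_zero]
      _ ≤ mCut (∑ i ∈ Finset.Icc 1 k, F i) S := mCut_mono (prefix_le (by omega)) S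

end Cut

section EdgeConn

variable {V : Type*}

lemma mEdgeConn_le_mCut (M : Multiset (Sym2 V)) {S : Set V} (hS : S.Nonempty)
    (hSc : Sᶜ.Nonempty) : mEdgeConn M ≤ mCut M S :=
  Nat.sInf_le ⟨S, hS, hSc, rfl⟩

lemma exists_mCut_eq_mEdgeConn (M : Multiset (Sym2 V)) {S : Set V} (hS : S.Nonempty)
    (hSc : Sᶜ.Nonempty) :
    ∃ T : Set V, T.Nonempty ∧ Tᶜ.Nonempty ∧ mCut M T = mEdgeConn M :=
  Nat.sInf_mem (s := {c | ∃ S : Set V, S.Nonempty ∧ Sᶜ.Nonempty ∧ mCut M S = c})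
    ⟨_, S, hS, hSc, rfl⟩

lemma mEdgeConn_eq_zero (M : Multiset (Sym2 V))
    (h : ¬∃ S : Set V, S.Nonempty ∧ Sᶜ.Nonempty) : mEdgeConn M = 0 := by
  have hempty : {c | ∃ S : Set V, S.Nonempty ∧ Sᶜ.Nonempty ∧ mCut M S = c} = ∅ :=
    Set.eq_empty_of_forall_notMem fun _ ⟨S, hS, hSc, _⟩ => h ⟨S, hS, hSc⟩
  rw [mEdgeConn, hempty, Nat.sInf_empty]

lemma mEdgeConn_eq_and_mCut_eq_iff_of_le {H M : Multiset (Sym2 V)} (hMH : M ≤ H)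
    (hcut : ∀ S : Set V, min (mCut H S) (mEdgeConn H + 1) ≤ mCut M S) :
    mEdgeConn M = mEdgeConn H ∧ ∀ S : Set V, S.Nonempty → Sᶜ.Nonempty →
      (mCut M S = mEdgeConn M ↔ mCut H S = mEdgeConn H) := by
  by_cases hne : ∃ S : Set V, S.Nonempty ∧ Sᶜ.Nonempty
  swap
  · exact ⟨by rw [mEdgeConn_eq_zero M hne, mEdgeConn_eq_zero H hne],
      fun S hS hSc => absurd ⟨S, hS, hSc⟩ hne⟩
  obtain ⟨S₁, hS₁, hS₁c⟩ := hne
  have hconn_le {S : Set V} (hS : S.Nonempty) (hSc : Sᶜ.Nonempty) :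
      mEdgeConn H ≤ mCut M S := by
    have := hcut S
    have := mEdgeConn_le_mCut H hS hSc
    omega
  obtain ⟨T, hT, hTc, hTH⟩ := exists_mCut_eq_mEdgeConn H hS₁ hS₁c
  obtain ⟨U, hU, hUc, hUM⟩ := exists_mCut_eq_mEdgeConn M hS₁ hS₁c
  have hconn : mEdgeConn M = mEdgeConn H := by
    have := mEdgeConn_le_mCut M hT hTc
    have := mCut_mono hMH T
    have := hconn_le hU hUc
    omega
  refine ⟨hconn, fun S hS hSc => ?_⟩
  have := hcut S
  have := mCut_mono hMH S
  have := mEdgeConn_le_mCut H hS hSc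
  have := hconn_le hS hSc
  omega

end EdgeConn

open scoped Classical in
theorem msfd_min_cut_iff_general {V : Type*} (H : Multiset (Sym2 V))
    (N : Multiset (Sym2 V)) (hN : N ≤ H)
    (m : ℕ) (hm : mEdgeConn H + 1 ≤ m) (F : ℕ → Multiset (Sym2 V))
    (hF : IsMSFD (H - N) m F) :
    mEdgeConn (N + ∑ i ∈ Finset.Icc 1 (mEdgeConn H + 1), F i) = mEdgeConn H ∧
    ∀ S : Set V, S.Nonempty → Sᶜ.Nonempty →
      (mCut (N + ∑ i ∈ Finset.Icc 1 (mEdgeConn H + 1), F i) S =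
        mEdgeConn (N + ∑ i ∈ Finset.Icc 1 (mEdgeConn H + 1), F i) ↔
       mCut H S = mEdgeConn H) := by
  have hforests : ∑ i ∈ Finset.Icc 1 (mEdgeConn H + 1), F i ≤ H - N :=
    hF.1 ▸ Finset.sum_le_sum_of_subset (Finset.Icc_subset_Icc_right hm)
  refine mEdgeConn_eq_and_mCut_eq_iff_of_le ?_ fun S => ?_
  · calc N + ∑ i ∈ Finset.Icc 1 (mEdgeConn H + 1), F i ≤ N + (H - N) :=
          add_le_add le_rfl hforests
      _ = H := add_tsub_cancel_of_le hN
  · have hsplit : mCut H S = mCut N S + mCut (H - N) S := by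
      rw [← mCut_add, add_tsub_cancel_of_le hN]
    have := hF.min_mCut_le_mCut_sum hm S
    rw [mCut_add]
    omega

open scoped Classical in
/-- Let `H` be a multigraph with edge connectivity `λ_H`, let `N ⊆ E_H`, let
`F 1, …, F m` be an msfd of order `m ≥ λ_H + 1` of `H ∖ N`, and let
`H' = N ∪ F 1 ∪ … ∪ F (λ_H + 1)`. Then `λ(H') = λ(H)` and a cut `(S, V∖S)` is a
minimum cut of `H'` iff it is a minimum cut of `H`. -/
theorem msfd_min_cut_iff {V : Type*} [Fintype V] (H : Multiset (Sym2 V))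
    (hH : ∀ e ∈ H, ¬e.IsDiag) (N : Multiset (Sym2 V)) (hN : N ≤ H)
    (m : ℕ) (hm : mEdgeConn H + 1 ≤ m) (F : ℕ → Multiset (Sym2 V))
    (hF : IsMSFD (H - N) m F) :
    mEdgeConn (N + ∑ i ∈ Finset.Icc 1 (mEdgeConn H + 1), F i) = mEdgeConn H ∧
    ∀ S : Set V, S.Nonempty → Sᶜ.Nonempty →
      (mCut (N + ∑ i ∈ Finset.Icc 1 (mEdgeConn H + 1), F i) S =
        mEdgeConn (N + ∑ i ∈ Finset.Icc 1 (mEdgeConn H + 1), F i) ↔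
       mCut H S = mEdgeConn H) :=
  msfd_min_cut_iff_general H N hN m hm F hF
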